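/- arXiv:2005.06869 — 4 statements merged into one kernel-verified Lean document; each statement's English description precedes it below -/
import Mathlib

section
/- For every natural number m ≥ 1 and every real x ≥ 0, the sum over k from 1 to m of min(x/k, k/m) is at least c · min(m, x + x·log₊(min(m, √(m/x)))) for some absolute constant c > 0 (e.g., c = 1/8), where log₊(t) = max(0, log t). -/
/-!
For large `x` (namely `m ≤ 16 x`) every term is at least `min x m * k / m²`, and summing
gives `min x m / 2 ≥ m / 32`. For small `x`, put `K = max 1 ⌈√(m x)⌉`: from `k = K` on the
minimum is `x / k`, so comparing the harmonic tail with `∫ dt / t` gives at least `x log ((m + 1) / K)`. Since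
`√(m / x) = m / √(m x)`, the ratio `(m + 1) / K` is at least `2` and at least half of
`min m √(m / x)`, which makes `log ((m + 1) / K)` comparable to `1 + log⁺ (min m √(m / x))`.
-/

open Finset Real

lemma sum_Icc_one_natCast_mul_two (m : ℕ) : (∑ k ∈ Icc 1 m, (k : ℝ)) * 2 = m * (m + 1) := by
  induction m with
  | zero => simp
  | succ n ih =>
    rw [sum_Icc_succ_top (by omega), add_mul, ih]
    push_cast
    ring

lemma log_div_le_sum_Ico_inv {a b : ℕ} (ha : 0 < a) (hab : a ≤ b) :
    log ((b : ℝ) / a) ≤ ∑ k ∈ Ico a b, (k : ℝ)⁻¹ := by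
  have ha' : (0 : ℝ) < a := by exact_mod_cast ha
  rw [← integral_inv_of_pos ha' (ha'.trans_le (by exact_mod_cast hab))]
  exact AntitoneOn.integral_le_sum_Ico hab fun u hu v _ huv => inv_anti₀ (ha'.trans_le hu.1) huv

lemma natCast_max_one_ceil_le (t : ℝ) : ((max 1 ⌈t⌉₊ : ℕ) : ℝ) ≤ max 1 (2 * t) := by
  rcases le_or_gt t 1 with ht | ht
  · have : ⌈t⌉₊ ≤ 1 := Nat.ceil_le.mpr (by simpa using ht)
    simp [this]
  · push_cast
    exact max_le_max le_rfl (Nat.ceil_le_two_mul (by linarith))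

lemma one_add_posLog_le_four_mul_log {u y : ℝ} (hu : 0 ≤ u) (hy : 2 ≤ y) (huy : u ≤ 2 * y) :
    1 + log⁺ u ≤ 4 * log y := by
  have hy2 : log (y ^ 2) = 2 * log y := by simp [log_pow]
  have hone : 1 ≤ log (y ^ 2) := by
    rw [le_log_iff_exp_le (by positivity)]
    nlinarith [exp_one_lt_d9]
  have hpos : log⁺ u ≤ log (y ^ 2) :=
    calc log⁺ u ≤ log⁺ (2 * y) := posLog_le_posLog hu huy
      _ = log (2 * y) := posLog_eq_log (by rw [abs_of_pos (by linarith)]; linarith)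
      _ ≤ log (y ^ 2) := log_le_log (by linarith) (by nlinarith)
  linarith

section SumMin

variable {m : ℕ} {x : ℝ}

lemma min_div_two_le_sum_min (hm : 0 < m) (hx : 0 ≤ x) :
    min x m / 2 ≤ ∑ k ∈ Icc 1 m, min (x / k) (k / m) := by
  have hm' : (0 : ℝ) < m := by exact_mod_cast hm
  have hterm : ∀ k ∈ Icc 1 m, min x m / m ^ 2 * k ≤ min (x / k) (k / m) := by
    intro k hk
    obtain ⟨hk1, hkm⟩ := mem_Icc.mp hk
    have hk' : (0 : ℝ) < k := by exact_mod_cast hk1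
    have hkm' : (k : ℝ) ≤ m := by exact_mod_cast hkm
    have hmin : 0 ≤ min x m := le_min hx hm'.le
    refine le_min ?_ ?_
    · rw [le_div_iff₀ hk', div_mul_eq_mul_div, div_mul_eq_mul_div, div_le_iff₀ (by positivity)]
      nlinarith [min_le_left x m, mul_le_mul hkm' hkm' hk'.le hm'.le]
    · rw [div_mul_eq_mul_div, div_le_div_iff₀ (by positivity) hm']
      have hkm0 : (0 : ℝ) ≤ k * m := by positivity
      nlinarith [mul_le_mul_of_nonneg_right (min_le_right x (m : ℝ)) hkm0]
  calc min x m / 2 ≤ min x m / m ^ 2 * (m * (m + 1) / 2) := by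
        rw [show min x m / m ^ 2 * (m * (m + 1) / 2) = min x m / 2 * ((m + 1) / m) by
          field_simp]
        exact le_mul_of_one_le_right (by positivity) ((one_le_div hm').mpr (by linarith))
    _ = ∑ k ∈ Icc 1 m, min x m / m ^ 2 * k := by
        rw [← mul_sum, ← sum_Icc_one_natCast_mul_two, mul_div_cancel_right₀ _ two_ne_zero]
    _ ≤ _ := sum_le_sum hterm

lemma mul_log_le_sum_min {K : ℕ} (hK : 0 < K) (hKm : K ≤ m) (hx : 0 ≤ x)
    (hxK : m * x ≤ (K : ℝ) ^ 2) :
    x * log ((m + 1) / K) ≤ ∑ k ∈ Icc 1 m, min (x / k) (k / m) := by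
  have hK' : (0 : ℝ) < K := by exact_mod_cast hK
  have hm' : (0 : ℝ) < m := by exact_mod_cast hK.trans_le hKm
  calc x * log ((m + 1) / K) ≤ x * ∑ k ∈ Ico K (m + 1), (k : ℝ)⁻¹ := by
        gcongr
        exact_mod_cast log_div_le_sum_Ico_inv hK (by omega)
    _ = ∑ k ∈ Ico K (m + 1), min (x / k) (k / m) := by
        rw [mul_sum]
        refine sum_congr rfl fun k hk => ?_
        have hKk : (K : ℝ) ≤ k := by exact_mod_cast (mem_Ico.mp hk).1
        have hk' : (0 : ℝ) < k := hK'.trans_le hKk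
        rw [min_eq_left ((div_le_div_iff₀ hk' hm').mpr (by nlinarith)), div_eq_mul_inv]
    _ ≤ ∑ k ∈ Icc 1 m, min (x / k) (k / m) := by
        refine sum_le_sum_of_subset_of_nonneg (fun k hk => ?_) fun k _ _ => by positivity
        simp only [mem_Ico, mem_Icc] at hk ⊢
        omega

lemma mul_one_add_posLog_div_four_le_sum_min (hm : 0 < m) (hx : 0 ≤ x) (hxm : 16 * x ≤ m) :
    x * (1 + log⁺ (min (m : ℝ) √(m / x))) / 4 ≤ ∑ k ∈ Icc 1 m, min (x / k) (k / m) := by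
  set t := √(m * x)
  set K := max 1 ⌈t⌉₊
  have hm' : (1 : ℝ) ≤ m := by exact_mod_cast hm
  have hK : 1 ≤ K := le_max_left _ _
  have htK : t ≤ K := (Nat.le_ceil t).trans (by exact_mod_cast le_max_right _ _)
  have hKt : (K : ℝ) ≤ max 1 (2 * t) := natCast_max_one_ceil_le t
  have ht4 : 4 * t ≤ m := by
    have : t ≤ m / 4 := (sqrt_le_left (by positivity)).mpr (by nlinarith)
    linarith
  have hKm : 2 * (K : ℝ) ≤ m + 1 := by
    rcases le_max_iff.mp hKt with h | h <;> linarith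
  have hu0 : 0 ≤ min (m : ℝ) √(m / x) := le_min (by positivity) (sqrt_nonneg _)
  have hu : min (m : ℝ) √(m / x) ≤ 2 * ((m + 1) / K) := by
    rw [← mul_div_assoc, le_div_iff₀ (by positivity)]
    rcases le_max_iff.mp hKt with h | h
    · nlinarith [min_le_left (m : ℝ) √(m / x)]
    · have hprod : √(m / x) * t ≤ m := by
        rw [← sqrt_mul (by positivity), sqrt_le_left (by positivity)]
        calc (m : ℝ) / x * (m * x) = m ^ 2 * (x / x) := by ring
          _ ≤ m ^ 2 := mul_le_of_le_one_right (by positivity) (div_self_le_one x)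
      nlinarith [min_le_right (m : ℝ) √(m / x)]
  have hlog := one_add_posLog_le_four_mul_log hu0
    ((le_div_iff₀ (by positivity)).mpr (by linarith)) hu
  calc x * (1 + log⁺ (min (m : ℝ) √(m / x))) / 4 ≤ x * log ((m + 1) / K) := by
        rw [mul_div_assoc]
        gcongr
        linarith
    _ ≤ _ := by
      refine mul_log_le_sum_min (by omega) (by exact_mod_cast (by linarith : (K : ℝ) ≤ m)) hx ?_
      calc (m : ℝ) * x = t ^ 2 := (sq_sqrt (by positivity)).symm
        _ ≤ (K : ℝ) ^ 2 := by gcongr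

end SumMin

theorem stmt0 :
    ∃ c : ℝ, 0 < c ∧ ∀ (m : ℕ), 1 ≤ m → ∀ x : ℝ, 0 ≤ x →
      ∑ k ∈ Finset.Icc 1 m, min (x / (k : ℝ)) ((k : ℝ) / (m : ℝ)) ≥
        c * min (m : ℝ)
          (x + x * max 0 (Real.log (min (m : ℝ) (Real.sqrt ((m : ℝ) / x))))) := by
  refine ⟨1 / 32, by norm_num, fun m hm x hx => ?_⟩
  have hm' : (1 : ℝ) ≤ m := by exact_mod_cast hm
  rw [ge_iff_le]
  rcases le_total (m : ℝ) (16 * x) with hlarge | hsmall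
  · calc 1 / 32 * min (m : ℝ) (x + x * max 0 (log (min (m : ℝ) √(m / x))))
        ≤ 1 / 32 * m := by gcongr; exact min_le_left _ _
      _ ≤ min x m / 2 := by
        rw [le_div_iff₀ two_pos]
        exact le_min (by linarith) (by linarith)
      _ ≤ _ := min_div_two_le_sum_min hm hx
  · have hlog : 0 ≤ log⁺ (min (m : ℝ) √(m / x)) := posLog_nonneg
    calc 1 / 32 * min (m : ℝ) (x + x * max 0 (log (min (m : ℝ) √(m / x))))
        ≤ 1 / 32 * (x * (1 + log⁺ (min (m : ℝ) √(m / x)))) := by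
          gcongr
          exact (min_le_right _ _).trans_eq (mul_one_add x _).symm
      _ ≤ x * (1 + log⁺ (min (m : ℝ) √(m / x))) / 4 := by nlinarith
      _ ≤ _ := mul_one_add_posLog_div_four_le_sum_min hm hx hsmall
end

section
/- Let e₁,…,e_p be the standard basis of ℝ^p, fix an index i, and let ξ = Σ_{j≠i} x_j (e_i e_jᵀ − e_j e_iᵀ) with Σ_{j≠i} x_j² = 1. Then for every real t, the matrix exponential satisfies exp(tξ)_{ii} = cos t and exp(tξ)_{ji} = −x_j sin t for every j ≠ i. -/
/-!
Write `e = eᵢ` and `y` for `x` with its `i`-th entry replaced by `0`. Then `e` and `y` are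
orthonormal and `ξ = e yᵀ - y eᵀ`, so `ξ² = -(e eᵀ + y yᵀ)` and `ξ³ = -ξ`. For such a matrix the
even and odd parts of the exponential series are the cosine and sine series, which gives
Rodrigues' formula `exp (t ξ) = 1 + sin t • ξ + (1 - cos t) • ξ²`; its `i`-th column is
`cos t • e - sin t • y`.
-/

open Matrix

open NormedSpace Nat

section PowThreeEqNeg

variable {R 𝔸 : Type*} [CommRing R] [Ring 𝔸] [Algebra R 𝔸] {A : 𝔸}

theorem pow_two_mul_add_one_of_pow_three_eq_neg (hA : A ^ 3 = -A) (k : ℕ) :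
    A ^ (2 * k + 1) = (-1 : R) ^ k • A := by
  induction k with
  | zero => simp
  | succ k ih =>
    rw [show 2 * (k + 1) + 1 = 2 + (2 * k + 1) by ring, pow_add, ih, mul_smul_comm,
      ← pow_succ, hA, pow_succ, smul_neg, mul_neg_one, neg_smul]

theorem pow_two_mul_add_two_of_pow_three_eq_neg (hA : A ^ 3 = -A) (k : ℕ) :
    A ^ (2 * k + 2) = (-1 : R) ^ k • A ^ 2 := by
  rw [pow_succ, pow_two_mul_add_one_of_pow_three_eq_neg (R := R) hA, smul_mul_assoc, ← sq]

end PowThreeEqNeg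

theorem exp_smul_eq_of_pow_three_eq_neg {𝔸 : Type*} [NormedRing 𝔸] [NormedAlgebra ℝ 𝔸]
    [CompleteSpace 𝔸] {A : 𝔸} (hA : A ^ 3 = -A) (t : ℝ) :
    exp (t • A) = 1 + Real.sin t • A + (1 - Real.cos t) • A ^ 2 := by
  set f : ℕ → 𝔸 := fun n => ((n ! : ℝ)⁻¹ * t ^ n) • A ^ n
  have hexp : HasSum f (exp (t • A)) := by
    simpa only [smul_pow, smul_smul] using exp_series_hasSum_exp' (𝕂 := ℝ) (t • A)
  have hodd : ∀ k, f (2 * k + 1) = ((-1) ^ k * t ^ (2 * k + 1) / (2 * k + 1)! : ℝ) • A := by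
    intro k
    simp only [f]
    rw [pow_two_mul_add_one_of_pow_three_eq_neg (R := ℝ) hA, smul_smul, ← div_eq_inv_mul]
    ring_nf
  have heven : ∀ k, f (2 * (k + 1)) =
      ((-1) ^ (k + 1) * t ^ (2 * (k + 1)) / (2 * (k + 1))! : ℝ) • -A ^ 2 := by
    intro k
    simp only [f]
    rw [show 2 * (k + 1) = 2 * k + 2 by ring, pow_two_mul_add_two_of_pow_three_eq_neg (R := ℝ) hA,
      smul_smul, smul_neg, ← neg_smul]
    ring_nf
  have hcos_tail : HasSum (fun k => (-1) ^ (k + 1) * t ^ (2 * (k + 1)) / (2 * (k + 1))! : ℕ → ℝ)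
      (Real.cos t - 1) := by
    simpa using (hasSum_nat_add_iff' 1).mpr (Real.hasSum_cos t)
  refine hexp.unique ?_
  rw [add_right_comm]
  refine HasSum.even_add_odd (f := f) ?_ ?_
  · have := HasSum.zero_add (f := fun k => f (2 * k))
      ((hcos_tail.smul_const (-A ^ 2)).congr_fun heven)
    rwa [show f (2 * 0) = 1 by simp [f], smul_neg, ← neg_smul, neg_sub] at this
  · exact (Real.hasSum_sin t).smul_const A |>.congr_fun hodd

section Orthonormal

variable {n R : Type*} [Fintype n] [DecidableEq n] [CommRing R] {u v : n → R}

theorem vecMulVec_sub_vecMulVec_sq (hu : u ⬝ᵥ u = 1) (hv : v ⬝ᵥ v = 1) (huv : u ⬝ᵥ v = 0) :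
    (vecMulVec u v - vecMulVec v u) ^ 2 = -(vecMulVec u u + vecMulVec v v) := by
  rw [sq, sub_mul, mul_sub, mul_sub, vecMulVec_mul_vecMulVec, vecMulVec_mul_vecMulVec,
    vecMulVec_mul_vecMulVec, vecMulVec_mul_vecMulVec, dotProduct_comm v u, hu, hv, huv]
  simp only [zero_smul, one_smul, vecMulVec_zero]
  abel

theorem vecMulVec_sub_vecMulVec_pow_three (hu : u ⬝ᵥ u = 1) (hv : v ⬝ᵥ v = 1)
    (huv : u ⬝ᵥ v = 0) :
    (vecMulVec u v - vecMulVec v u) ^ 3 = -(vecMulVec u v - vecMulVec v u) := by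
  rw [pow_succ, vecMulVec_sub_vecMulVec_sq hu hv huv, neg_mul, add_mul, mul_sub, mul_sub,
    vecMulVec_mul_vecMulVec, vecMulVec_mul_vecMulVec,
    vecMulVec_mul_vecMulVec, vecMulVec_mul_vecMulVec, dotProduct_comm v u, hu, hv, huv]
  simp only [zero_smul, one_smul, vecMulVec_zero]
  abel

end Orthonormal

theorem sum_erase_smul_single_sub_single {n R : Type*} [Fintype n] [DecidableEq n] [Ring R]
    (i : n) (x : n → R) :
    ∑ j ∈ Finset.univ.erase i, x j • (single i j 1 - single j i 1) =
      vecMulVec (Pi.single i 1) (Function.update x i 0) -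
        vecMulVec (Function.update x i 0) (Pi.single i 1) := by
  ext a b
  simp only [Matrix.sum_apply, Matrix.smul_apply, Matrix.sub_apply, single_apply, vecMulVec_apply,
    Pi.single_apply, Function.update_apply]
  by_cases ha : a = i <;> by_cases hb : b = i <;>
    simp [ha, hb, eq_comm (a := i)]

theorem stmt5 (p : ℕ) (i : Fin p) (x : Fin p → ℝ)
    (hx : ∑ j ∈ Finset.univ.erase i, (x j) ^ 2 = 1)
    (ξ : Matrix (Fin p) (Fin p) ℝ)
    (hξ : ξ = ∑ j ∈ Finset.univ.erase i,
      x j • (Matrix.single i j 1 - Matrix.single j i 1))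
    (t : ℝ) :
    (NormedSpace.exp (t • ξ)) i i = Real.cos t ∧
    ∀ j : Fin p, j ≠ i → (NormedSpace.exp (t • ξ)) j i = -x j * Real.sin t := by
  set e : Fin p → ℝ := Pi.single i 1
  set y := Function.update x i 0
  have he : e ⬝ᵥ e = 1 := by simp [e]
  have hy : y ⬝ᵥ y = 1 := by
    rw [← hx, dotProduct, ← Finset.sum_erase (a := i) _ (by simp [y])]
    exact Finset.sum_congr rfl fun j hj => by simp [y, Finset.ne_of_mem_erase hj, sq]
  have hey : e ⬝ᵥ y = 0 := by simp [e, y]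
  rw [sum_erase_smul_single_sub_single] at hξ
  have hexp : exp (t • ξ) = 1 + Real.sin t • ξ + (1 - Real.cos t) • ξ ^ 2 := by
    -- `exp` depends only on the topology, which every matrix norm induces.
    let : NormedRing (Matrix (Fin p) (Fin p) ℝ) := Matrix.linftyOpNormedRing
    let : NormedAlgebra ℝ (Matrix (Fin p) (Fin p) ℝ) := Matrix.linftyOpNormedAlgebra
    exact exp_smul_eq_of_pow_three_eq_neg (hξ ▸ vecMulVec_sub_vecMulVec_pow_three he hy hey) t
  rw [hexp, hξ, vecMulVec_sub_vecMulVec_sq he hy hey]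
  refine ⟨by simp [e, y, vecMulVec_apply], fun j hj => ?_⟩
  simp [e, y, vecMulVec_apply, hj, mul_comm]
end

section
/- If ℙ = ℙ₁ ⊗ ℙ₂ and ℚ = ℚ₁ ⊗ ℚ₂ are product probability measures with ℙ₁ ≪ ℚ₁ and ℙ₂ ≪ ℚ₂, then the chi-square divergence satisfies χ²(ℙ, ℚ) = (1 + χ²(ℙ₁, ℚ₁))(1 + χ²(ℙ₂, ℚ₂)) − 1. -/
/-! The density of a product of measures is the product of the densities, so the second moment
`∫ (dP/dQ)² dQ = 1 + χ²(P, Q)` is multiplicative by Fubini. -/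

open MeasureTheory

/-- The chi-square divergence `χ²(P, Q) = ∫ (dP/dQ)² dQ − 1`. -/
noncomputable def chiSq {α : Type*} [MeasurableSpace α] (P Q : Measure α) : ℝ :=
  (∫ x, ((P.rnDeriv Q x).toReal) ^ 2 ∂Q) - 1

namespace MeasureTheory.Measure

variable {α β : Type*} [MeasurableSpace α] [MeasurableSpace β]
  {P₁ Q₁ : Measure α} {P₂ Q₂ : Measure β}
  [SigmaFinite P₁] [SigmaFinite Q₁] [SigmaFinite P₂] [SigmaFinite Q₂]

theorem prod_eq_withDensity_rnDeriv_mul (h₁ : P₁ ≪ Q₁) (h₂ : P₂ ≪ Q₂) :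
    P₁.prod P₂ = (Q₁.prod Q₂).withDensity fun p => P₁.rnDeriv Q₁ p.1 * P₂.rnDeriv Q₂ p.2 := by
  refine prod_eq fun s t hs ht => ?_
  rw [withDensity_apply _ (hs.prod ht), ← prod_restrict,
    lintegral_prod_mul (measurable_rnDeriv _ _).aemeasurable
      (measurable_rnDeriv _ _).aemeasurable,
    setLIntegral_rnDeriv h₁, setLIntegral_rnDeriv h₂]

theorem rnDeriv_prod_ae_eq_mul (h₁ : P₁ ≪ Q₁) (h₂ : P₂ ≪ Q₂) :
    (P₁.prod P₂).rnDeriv (Q₁.prod Q₂) =ᵐ[Q₁.prod Q₂]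
      fun p => P₁.rnDeriv Q₁ p.1 * P₂.rnDeriv Q₂ p.2 := by
  rw [prod_eq_withDensity_rnDeriv_mul h₁ h₂]
  exact rnDeriv_withDensity _ (by fun_prop)

theorem integral_toReal_rnDeriv_prod_sq (h₁ : P₁ ≪ Q₁) (h₂ : P₂ ≪ Q₂) :
    ∫ p, ((P₁.prod P₂).rnDeriv (Q₁.prod Q₂) p).toReal ^ 2 ∂(Q₁.prod Q₂) =
      (∫ x, (P₁.rnDeriv Q₁ x).toReal ^ 2 ∂Q₁) * ∫ y, (P₂.rnDeriv Q₂ y).toReal ^ 2 ∂Q₂ := by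
  rw [integral_congr_ae ((rnDeriv_prod_ae_eq_mul h₁ h₂).mono fun p hp => by rw [hp])]
  simp only [ENNReal.toReal_mul, mul_pow]
  exact integral_prod_mul (fun x => (P₁.rnDeriv Q₁ x).toReal ^ 2)
    fun y => (P₂.rnDeriv Q₂ y).toReal ^ 2

end MeasureTheory.Measure

theorem stmt8_general {α β : Type*} [MeasurableSpace α] [MeasurableSpace β]
    (P₁ Q₁ : Measure α) (P₂ Q₂ : Measure β)
    [IsProbabilityMeasure P₁] [IsProbabilityMeasure Q₁]
    [IsProbabilityMeasure P₂] [IsProbabilityMeasure Q₂]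
    (h₁ : P₁ ≪ Q₁) (h₂ : P₂ ≪ Q₂) :
    chiSq (P₁.prod P₂) (Q₁.prod Q₂) =
      (1 + chiSq P₁ Q₁) * (1 + chiSq P₂ Q₂) - 1 := by
  simp only [chiSq, Measure.integral_toReal_rnDeriv_prod_sq h₁ h₂]
  ring

theorem stmt8 {α β : Type*} [MeasurableSpace α] [MeasurableSpace β]
    (P₁ Q₁ : Measure α) (P₂ Q₂ : Measure β)
    [IsProbabilityMeasure P₁] [IsProbabilityMeasure Q₁]
    [IsProbabilityMeasure P₂] [IsProbabilityMeasure Q₂]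
    (h₁ : P₁ ≪ Q₁) (h₂ : P₂ ≪ Q₂)
    (hi₁ : Integrable (fun x => ((P₁.rnDeriv Q₁ x).toReal) ^ 2) Q₁)
    (hi₂ : Integrable (fun x => ((P₂.rnDeriv Q₂ x).toReal) ^ 2) Q₂) :
    chiSq (P₁.prod P₂) (Q₁.prod Q₂) =
      (1 + chiSq P₁ Q₁) * (1 + chiSq P₂ Q₂) - 1 :=
  stmt8_general P₁ Q₁ P₂ Q₂ h₁ h₂
end

section
/- Let μ be a probability measure on SO(p) (p ≥ 2) invariant under simultaneous permutation conjugation and satisfying ∫ tr(U) dμ(U) ≥ (1−δ)p for some δ ∈ (0,1). Then ∫ U₁₁U₂₂ dμ(U) ≥ (1−δ)² − (1−(1−δ)²)/(p−1), and |∫ U₁₂U₂₁ dμ(U)| ≤ (1−(1−δ)²)/(p−1); consequently ∫ (U₁₁U₂₂ + U₁₂U₂₁) dμ(U) ≥ (1−δ)² − 2(1−(1−δ)²)/(p−1). -/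
open MeasureTheory Matrix

/-- Matrices inherit the product measurable structure. -/
instance matrixMeasurableSpace {p : ℕ} : MeasurableSpace (Matrix (Fin p) (Fin p) ℝ) :=
  inferInstanceAs (MeasurableSpace (Fin p → Fin p → ℝ))

/-!
Write `m = ∫ U₁₁ dμ`; by permutation invariance every diagonal entry has mean `m`, so
`∫ tr U dμ = p m ≥ (1 - δ) p`. Invariance also reduces `∫ (tr U)²` to
`p (∫ U₁₁² + (p - 1) ∫ U₁₁U₂₂)`, and Cauchy–Schwarz `(∫ tr U)² ≤ ∫ (tr U)²` together with
`∫ U₁₁² ≤ 1` bounds `∫ U₁₁U₂₂` from below. For the off-diagonal term, `2 |U₁₂U₂₁| ≤ U₁₂² + U₂₁²`,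
and the unit norm of the first row and column, with invariance, gives
`(p - 1) ∫ U₁₂² = (p - 1) ∫ U₂₁² = 1 - ∫ U₁₁² ≤ 1 - m²`.
-/

open Finset ProbabilityTheory

namespace Matrix

variable {n : Type*} [Fintype n] [DecidableEq n] {U : Matrix n n ℝ}

lemma abs_apply_le_one_of_mul_transpose_eq_one (hU : U * Uᵀ = 1) (i j : n) : |U i j| ≤ 1 :=
  entry_norm_bound_of_unitary (U := U) (by
    rwa [mem_unitaryGroup_iff, star_eq_conjTranspose, conjTranspose_eq_transpose_of_trivial]) i j

lemma sum_row_sq_of_mul_transpose_eq_one (hU : U * Uᵀ = 1) (i : n) : ∑ k, U i k ^ 2 = 1 := by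
  simpa [mul_apply, sq] using congrFun (congrFun hU i) i

lemma sum_col_sq_of_mul_transpose_eq_one (hU : U * Uᵀ = 1) (j : n) : ∑ k, U k j ^ 2 = 1 :=
  sum_row_sq_of_mul_transpose_eq_one (U := Uᵀ)
    (by rw [transpose_transpose]; exact mul_eq_one_comm.mp hU) j

end Matrix

lemma Fintype.sum_eq_add_card_sub_one_mul {ι R : Type*} [Fintype ι] [DecidableEq ι] [Ring R]
    {f : ι → R} {a : ι} {c : R} (hc : ∀ k, k ≠ a → f k = c) :
    ∑ k, f k = f a + ((Fintype.card ι : R) - 1) * c := by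
  rw [← add_sum_erase _ _ (mem_univ a), Finset.sum_congr rfl fun k hk => hc k (ne_of_mem_erase hk),
    
    sum_const, card_erase_of_mem (mem_univ a), card_univ, nsmul_eq_mul,
    Nat.cast_sub (Fintype.card_pos_iff.mpr ⟨a⟩), Nat.cast_one]

section CauchySchwarz

variable {Ω : Type*} [MeasurableSpace Ω] {μ : Measure Ω}

lemma sq_integral_le_integral_sq [IsProbabilityMeasure μ] {X : Ω → ℝ} (hX : MemLp X 2 μ) :
    (∫ ω, X ω ∂μ) ^ 2 ≤ ∫ ω, X ω ^ 2 ∂μ := by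
  have := variance_nonneg X μ
  rw [variance_eq_sub hX] at this
  simpa using this

lemma two_mul_abs_integral_mul_le {f g : Ω → ℝ} (hfg : Integrable (fun ω => f ω * g ω) μ)
    (hf : Integrable (fun ω => f ω ^ 2) μ) (hg : Integrable (fun ω => g ω ^ 2) μ) :
    2 * |∫ ω, f ω * g ω ∂μ| ≤ ∫ ω, f ω ^ 2 ∂μ + ∫ ω, g ω ^ 2 ∂μ :=
  calc 2 * |∫ ω, f ω * g ω ∂μ| ≤ 2 * ∫ ω, |f ω * g ω| ∂μ := by
        gcongr; exact abs_integral_le_integral_abs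
    _ = ∫ ω, 2 * |f ω * g ω| ∂μ := (integral_const_mul _ _).symm
    _ ≤ ∫ ω, (f ω ^ 2 + g ω ^ 2) ∂μ := integral_mono (hfg.abs.const_mul 2) (hf.add hg) fun ω => by
        simpa only [abs_mul, ← mul_assoc, sq_abs] using two_mul_le_add_sq |f ω| |g ω|
    _ = ∫ ω, f ω ^ 2 ∂μ + ∫ ω, g ω ^ 2 ∂μ := integral_add hf hg

end CauchySchwarz

lemma Equiv.Perm.exists_apply_eq_and_apply_eq {α : Type*} [DecidableEq α] {a b i j : α}
    (hab : a ≠ b) (hij : i ≠ j) : ∃ σ : Equiv.Perm α, σ a = i ∧ σ b = j := by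
  set τ := Equiv.swap a i
  have hτb : τ b ≠ i := fun h =>
    hab (τ.injective (h.trans (Equiv.swap_apply_left a i).symm)).symm
  exact ⟨Equiv.swap (τ b) j * τ, by simp [τ, Equiv.swap_apply_of_ne_of_ne hτb.symm hij], by simp⟩

section PermConjInvariant

variable {p : ℕ} {μ : Measure (Matrix (Fin p) (Fin p) ℝ)}

def IsPermConjInvariant (μ : Measure (Matrix (Fin p) (Fin p) ℝ)) : Prop :=
  ∀ σ : Equiv.Perm (Fin p), μ.map (fun U => U.submatrix σ σ) = μ

lemma measurable_matrix_apply (i j : Fin p) :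
    Measurable fun U : Matrix (Fin p) (Fin p) ℝ => U i j :=
  (measurable_pi_apply j).comp (measurable_pi_apply i)

lemma measurable_submatrix (σ : Equiv.Perm (Fin p)) :
    Measurable fun U : Matrix (Fin p) (Fin p) ℝ => U.submatrix σ σ :=
  measurable_pi_lambda _ fun _ => measurable_pi_lambda _ fun _ => measurable_matrix_apply _ _

lemma IsPermConjInvariant.integral_comp_submatrix (hμ : IsPermConjInvariant μ)
    (σ : Equiv.Perm (Fin p)) {f : Matrix (Fin p) (Fin p) ℝ → ℝ} (hf : Measurable f) :
    ∫ U, f (U.submatrix σ σ) ∂μ = ∫ U, f U ∂μ := by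
  rw [← integral_map (measurable_submatrix σ).aemeasurable
    (by rw [hμ σ]; exact hf.aestronglyMeasurable), hμ σ]

lemma IsPermConjInvariant.integral_apply_perm (hμ : IsPermConjInvariant μ)
    (σ : Equiv.Perm (Fin p)) (i j : Fin p) :
    ∫ U, U (σ i) (σ j) ∂μ = ∫ U, U i j ∂μ :=
  hμ.integral_comp_submatrix σ (measurable_matrix_apply i j)

lemma IsPermConjInvariant.integral_apply_mul_apply_perm (hμ : IsPermConjInvariant μ)
    (σ : Equiv.Perm (Fin p)) (i j k l : Fin p) :
    ∫ U, U (σ i) (σ j) * U (σ k) (σ l) ∂μ = ∫ U, U i j * U k l ∂μ :=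
  hμ.integral_comp_submatrix σ ((measurable_matrix_apply i j).mul (measurable_matrix_apply k l))

lemma IsPermConjInvariant.integral_apply_sq_perm (hμ : IsPermConjInvariant μ)
    (σ : Equiv.Perm (Fin p)) (i j : Fin p) :
    ∫ U, U (σ i) (σ j) ^ 2 ∂μ = ∫ U, U i j ^ 2 ∂μ :=
  hμ.integral_comp_submatrix σ ((measurable_matrix_apply i j).pow_const 2)

lemma IsPermConjInvariant.integral_diag_eq (hμ : IsPermConjInvariant μ) (i j : Fin p) :
    ∫ U, U i i ∂μ = ∫ U, U j j ∂μ := by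
  simpa using hμ.integral_apply_perm (Equiv.swap j i) j j

lemma IsPermConjInvariant.integral_diag_sq_eq (hμ : IsPermConjInvariant μ) (i j : Fin p) :
    ∫ U, U i i ^ 2 ∂μ = ∫ U, U j j ^ 2 ∂μ := by
  simpa using hμ.integral_apply_sq_perm (Equiv.swap j i) j j

lemma IsPermConjInvariant.integral_diag_mul_diag_eq (hμ : IsPermConjInvariant μ)
    {a b i j : Fin p} (hab : a ≠ b) (hij : i ≠ j) :
    ∫ U, U i i * U j j ∂μ = ∫ U, U a a * U b b ∂μ := by
  obtain ⟨σ, rfl, rfl⟩ := Equiv.Perm.exists_apply_eq_and_apply_eq hab hij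
  exact hμ.integral_apply_mul_apply_perm σ a a b b

lemma IsPermConjInvariant.integral_row_sq_eq (hμ : IsPermConjInvariant μ) {a b c : Fin p}
    (hab : a ≠ b) (hac : a ≠ c) :
    ∫ U, U a c ^ 2 ∂μ = ∫ U, U a b ^ 2 ∂μ := by
  simpa [Equiv.swap_apply_of_ne_of_ne hab hac] using
    hμ.integral_apply_sq_perm (Equiv.swap b c) a b

lemma IsPermConjInvariant.integral_col_sq_eq (hμ : IsPermConjInvariant μ) {a b c : Fin p}
    (hab : a ≠ b) (hac : a ≠ c) :
    ∫ U, U c a ^ 2 ∂μ = ∫ U, U b a ^ 2 ∂μ := by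
  simpa [Equiv.swap_apply_of_ne_of_ne hab hac] using
    hμ.integral_apply_sq_perm (Equiv.swap b c) b a

end PermConjInvariant

section Orthogonal

variable {p : ℕ} {μ : Measure (Matrix (Fin p) (Fin p) ℝ)}

lemma memLp_matrix_apply [IsFiniteMeasure μ] (hO : ∀ᵐ U ∂μ, U * Uᵀ = 1) (i j : Fin p)
    (q : ENNReal) : MemLp (fun U => U i j) q μ :=
  MemLp.of_bound (measurable_matrix_apply i j).aestronglyMeasurable 1
    (hO.mono fun _ hU => abs_apply_le_one_of_mul_transpose_eq_one hU i j)

lemma integrable_matrix_apply [IsFiniteMeasure μ] (hO : ∀ᵐ U ∂μ, U * Uᵀ = 1) (i j : Fin p) :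
    Integrable (fun U => U i j) μ :=
  memLp_one_iff_integrable.mp (memLp_matrix_apply hO i j 1)

lemma integrable_matrix_apply_mul [IsFiniteMeasure μ] (hO : ∀ᵐ U ∂μ, U * Uᵀ = 1)
    (i j k l : Fin p) :
    Integrable (fun U => U i j * U k l) μ :=
  (memLp_matrix_apply hO i j ⊤).integrable_mul (memLp_matrix_apply hO k l 1)

lemma integrable_matrix_apply_sq [IsFiniteMeasure μ] (hO : ∀ᵐ U ∂μ, U * Uᵀ = 1) (i j : Fin p) :
    Integrable (fun U => U i j ^ 2) μ := by
  simpa only [sq] using integrable_matrix_apply_mul hO i j i j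

end Orthogonal

section Moments

variable {p : ℕ} {μ : Measure (Matrix (Fin p) (Fin p) ℝ)}

lemma IsPermConjInvariant.integral_trace [IsFiniteMeasure μ] (hO : ∀ᵐ U ∂μ, U * Uᵀ = 1)
    (hμ : IsPermConjInvariant μ) (a : Fin p) :
    ∫ U, U.trace ∂μ = p * ∫ U, U a a ∂μ := by
  simp only [trace, diag_apply]
  rw [integral_finsetSum _ fun i _ => integrable_matrix_apply hO i i]
  simp [hμ.integral_diag_eq _ a]

lemma IsPermConjInvariant.integral_trace_sq [IsFiniteMeasure μ] (hO : ∀ᵐ U ∂μ, U * Uᵀ = 1)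
    (hμ : IsPermConjInvariant μ) {a b : Fin p} (hab : a ≠ b) :
    ∫ U, U.trace ^ 2 ∂μ = p * (∫ U, U a a ^ 2 ∂μ + (p - 1) * ∫ U, U a a * U b b ∂μ) := by
  have hrow (i : Fin p) : ∑ j, ∫ U, U i i * U j j ∂μ =
      ∫ U, U a a ^ 2 ∂μ + (p - 1) * ∫ U, U a a * U b b ∂μ := by
    rw [Fintype.sum_eq_add_card_sub_one_mul (a := i) fun j hj =>
      hμ.integral_diag_mul_diag_eq hab hj.symm]
    simp [← sq, hμ.integral_diag_sq_eq i a]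
  have htrace_sq (U : Matrix (Fin p) (Fin p) ℝ) : U.trace ^ 2 = ∑ i, ∑ j, U i i * U j j := by
    rw [sq, trace, sum_mul_sum]
    rfl
  simp only [htrace_sq]
  rw [integral_finsetSum _ fun i _ => integrable_finsetSum _ fun j _ =>
    integrable_matrix_apply_mul hO i i j j]
  simp only [integral_finsetSum _ fun j _ => integrable_matrix_apply_mul hO _ _ j j, hrow,
    sum_const, card_univ, Fintype.card_fin, nsmul_eq_mul]

lemma IsPermConjInvariant.integral_diag_sq_add_row_sq [IsProbabilityMeasure μ]
    (hO : ∀ᵐ U ∂μ, U * Uᵀ = 1) (hμ : IsPermConjInvariant μ) {a b : Fin p} (hab : a ≠ b) :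
    ∫ U, U a a ^ 2 ∂μ + (p - 1) * ∫ U, U a b ^ 2 ∂μ = 1 := by
  have hsum : ∫ U, ∑ k, U a k ^ 2 ∂μ = 1 := by
    rw [integral_congr_ae (hO.mono fun U hU => sum_row_sq_of_mul_transpose_eq_one hU a)]
    simp
  rw [integral_finsetSum _ fun k _ => integrable_matrix_apply_sq hO a k,
    Fintype.sum_eq_add_card_sub_one_mul fun k hk => hμ.integral_row_sq_eq hab hk.symm] at hsum
  simpa using hsum

lemma IsPermConjInvariant.integral_diag_sq_add_col_sq [IsProbabilityMeasure μ]
    (hO : ∀ᵐ U ∂μ, U * Uᵀ = 1) (hμ : IsPermConjInvariant μ) {a b : Fin p} (hab : a ≠ b) :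
    ∫ U, U a a ^ 2 ∂μ + (p - 1) * ∫ U, U b a ^ 2 ∂μ = 1 := by
  have hsum : ∫ U, ∑ k, U k a ^ 2 ∂μ = 1 := by
    rw [integral_congr_ae (hO.mono fun U hU => sum_col_sq_of_mul_transpose_eq_one hU a)]
    simp
  rw [integral_finsetSum _ fun k _ => integrable_matrix_apply_sq hO k a,
    Fintype.sum_eq_add_card_sub_one_mul fun k hk => hμ.integral_col_sq_eq hab hk.symm] at hsum
  simpa using hsum

end Moments

section Bounds

variable {p : ℕ} {μ : Measure (Matrix (Fin p) (Fin p) ℝ)} [IsProbabilityMeasure μ]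

lemma IsPermConjInvariant.integral_diag_mul_diag_ge (hO : ∀ᵐ U ∂μ, U * Uᵀ = 1)
    (hμ : IsPermConjInvariant μ) {a b : Fin p} (hab : a ≠ b) :
    (∫ U, U a a ∂μ) ^ 2 - (1 - (∫ U, U a a ∂μ) ^ 2) / (p - 1) ≤ ∫ U, U a a * U b b ∂μ := by
  have hp : (1 : ℝ) < p := by
    exact_mod_cast Fin.nontrivial_iff_two_le.mp (nontrivial_of_ne a b hab)
  have hcs : (p * ∫ U, U a a ∂μ) ^ 2 ≤
      p * (∫ U, U a a ^ 2 ∂μ + (p - 1) * ∫ U, U a a * U b b ∂μ) := by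
    rw [← hμ.integral_trace hO a, ← hμ.integral_trace_sq hO hab]
    exact sq_integral_le_integral_sq (memLp_finsetSum _ fun i _ => memLp_matrix_apply hO i i 2)
  have hdiag_sq : ∫ U, U a a ^ 2 ∂μ ≤ 1 := by
    have hrow := hμ.integral_diag_sq_add_row_sq hO hab
    have hoff : 0 ≤ ∫ U, U a b ^ 2 ∂μ := integral_nonneg fun U => sq_nonneg (U a b)
    nlinarith
  rw [sub_le_comm, le_div_iff₀ (by linarith)]
  nlinarith

lemma IsPermConjInvariant.abs_integral_offdiag_mul_le (hO : ∀ᵐ U ∂μ, U * Uᵀ = 1)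
    (hμ : IsPermConjInvariant μ) {a b : Fin p} (hab : a ≠ b) :
    |∫ U, U a b * U b a ∂μ| ≤ (1 - (∫ U, U a a ∂μ) ^ 2) / (p - 1) := by
  have hp : (1 : ℝ) < p := by
    exact_mod_cast Fin.nontrivial_iff_two_le.mp (nontrivial_of_ne a b hab)
  have hamgm := two_mul_abs_integral_mul_le (integrable_matrix_apply_mul hO a b b a)
    (integrable_matrix_apply_sq hO a b) (integrable_matrix_apply_sq hO b a)
  have hcs := sq_integral_le_integral_sq (memLp_matrix_apply hO a a 2)
  have hrow := hμ.integral_diag_sq_add_row_sq hO hab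
  have hcol := hμ.integral_diag_sq_add_col_sq hO hab
  rw [le_div_iff₀ (by linarith)]
  nlinarith

end Bounds

theorem stmt18 (p : ℕ) (hp : 2 ≤ p) (δ : ℝ) (hδ : δ ∈ Set.Ioo (0 : ℝ) 1)
    (μ : Measure (Matrix (Fin p) (Fin p) ℝ)) [IsProbabilityMeasure μ]
    (hSO : ∀ᵐ U ∂μ, U * Uᵀ = 1 ∧ U.det = 1)
    (hinv : ∀ σ : Equiv.Perm (Fin p),
      Measure.map (fun U => Matrix.submatrix U σ σ) μ = μ)
    (htr : ∫ U, U.trace ∂μ ≥ (1 - δ) * p) :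
    (∫ U, U ⟨0, by omega⟩ ⟨0, by omega⟩ * U ⟨1, by omega⟩ ⟨1, by omega⟩ ∂μ ≥
        (1 - δ) ^ 2 - (1 - (1 - δ) ^ 2) / ((p : ℝ) - 1)) ∧
    (|∫ U, U ⟨0, by omega⟩ ⟨1, by omega⟩ * U ⟨1, by omega⟩ ⟨0, by omega⟩ ∂μ| ≤
        (1 - (1 - δ) ^ 2) / ((p : ℝ) - 1)) ∧
    (∫ U, (U ⟨0, by omega⟩ ⟨0, by omega⟩ * U ⟨1, by omega⟩ ⟨1, by omega⟩ +
           U ⟨0, by omega⟩ ⟨1, by omega⟩ * U ⟨1, by omega⟩ ⟨0, by omega⟩) ∂μ ≥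
        (1 - δ) ^ 2 - 2 * (1 - (1 - δ) ^ 2) / ((p : ℝ) - 1)) := by
  set a : Fin p := ⟨0, by omega⟩
  set b : Fin p := ⟨1, by omega⟩
  have hab : a ≠ b := by simp [a, b, Fin.ext_iff]
  have hO : ∀ᵐ U ∂μ, U * Uᵀ = 1 := hSO.mono fun _ hU => hU.1
  have hμ : IsPermConjInvariant μ := hinv
  have hm : 1 - δ ≤ ∫ U, U a a ∂μ := by
    rw [hμ.integral_trace hO a] at htr
    exact le_of_mul_le_mul_left (by linarith) (Nat.cast_pos.mpr (by omega) : (0 : ℝ) < p)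
  have hm_sq : (1 - δ) ^ 2 ≤ (∫ U, U a a ∂μ) ^ 2 := by
    gcongr
    linarith [hδ.2]
  have hbound : (1 - (∫ U, U a a ∂μ) ^ 2) / (p - 1) ≤ (1 - (1 - δ) ^ 2) / (p - 1) := by
    gcongr
    exact sub_nonneg.mpr (by exact_mod_cast (by omega : 1 ≤ p))
  have hdiag := hμ.integral_diag_mul_diag_ge hO hab
  have hoff := hμ.abs_integral_offdiag_mul_le hO hab
  refine ⟨by linarith, hoff.trans hbound, ?_⟩
  rw [integral_add (integrable_matrix_apply_mul hO a a b b)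
    (integrable_matrix_apply_mul hO a b b a), mul_div_assoc]
  linarith [neg_abs_le (∫ U, U a b * U b a ∂μ)]
end
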